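/- Let a > 0 and define, for s ∈ ℝ, y(s) = −a∫₀^s(∫₀^σ sinh(t²/2) dt) dσ and z(s) = a∫₀^s(∫₀^σ cosh(t²/2) dt) dσ, and α(s) = (s, y(s), z(s)). Then α is an admissible spacelike curve in the pseudo-Galilean space G¹₃ with constant curvature κ(s) = a and torsion τ(s) = s, with tangent T(s) = (1, −a∫₀^s sinh(t²/2) dt, a∫₀^s cosh(t²/2) dt), principal normal N(s) = (0, −sinh(s²/2), cosh(s²/2)), and binormal B(s) = (0, −cosh(s²/2), sinh(s²/2)); in particular α has constant curvature and non-constant torsion (a Salkowski curve). -/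

import Mathlib

/-! By the fundamental theorem of calculus, `y'' = -a sinh (s²/2)` and `z'' = a cosh (s²/2)`,
so `y''² - z''² = -a²` by `cosh² - sinh² = 1`: the curve is admissible with `κ = a` and `ε = -1`.
Differentiating once more, the torsion numerator is `a² s (cosh² - sinh²) = a² s`. -/

/-- The second coordinate of the Salkowski-type curve of Example 4.2. -/
noncomputable def ySal (a : ℝ) : ℝ → ℝ := fun s =>
  -a * ∫ σ in (0 : ℝ)..s, ∫ t in (0 : ℝ)..σ, Real.sinh (t ^ 2 / 2)

/-- The third coordinate of the Salkowski-type curve of Example 4.2. -/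
noncomputable def zSal (a : ℝ) : ℝ → ℝ := fun s =>
  a * ∫ σ in (0 : ℝ)..s, ∫ t in (0 : ℝ)..σ, Real.cosh (t ^ 2 / 2)

open Real intervalIntegral

theorem deriv_const_mul_primitive {f : ℝ → ℝ} (hf : Continuous f) (c a : ℝ) :
    deriv (fun s => c * ∫ t in a..s, f t) = fun s => c * f s :=
  funext fun s => ((hf.integral_hasStrictDerivAt a s).hasDerivAt.const_mul c).deriv

theorem contDiff_primitive {f : ℝ → ℝ} {n : ℕ} (hf : ContDiff ℝ n f) (a : ℝ) :
    ContDiff ℝ (n + 1) (fun s => ∫ t in a..s, f t) := by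
  rw [contDiff_succ_iff_deriv]
  refine ⟨fun s => (hf.continuous.integral_hasStrictDerivAt a s).hasDerivAt.differentiableAt,
    by simp, ?_⟩
  rwa [funext (hf.continuous.deriv_integral f a)]

theorem contDiff_sinh_sq_div_two {n : WithTop ℕ∞} : ContDiff ℝ n fun t : ℝ => sinh (t ^ 2 / 2) :=
  contDiff_sinh.comp ((contDiff_id.pow 2).div_const 2)

theorem contDiff_cosh_sq_div_two {n : WithTop ℕ∞} : ContDiff ℝ n fun t : ℝ => cosh (t ^ 2 / 2) :=
  contDiff_cosh.comp ((contDiff_id.pow 2).div_const 2)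

theorem hasDerivAt_sq_div_two (s : ℝ) : HasDerivAt (fun t : ℝ => t ^ 2 / 2) s s := by
  simpa using (hasDerivAt_pow 2 s).div_const 2

theorem contDiff_ySal (a : ℝ) : ContDiff ℝ 3 (ySal a) :=
  contDiff_const.mul
    (contDiff_primitive (n := 2) (contDiff_primitive (n := 1) contDiff_sinh_sq_div_two 0) 0)

theorem contDiff_zSal (a : ℝ) : ContDiff ℝ 3 (zSal a) :=
  contDiff_const.mul
    (contDiff_primitive (n := 2) (contDiff_primitive (n := 1) contDiff_cosh_sq_div_two 0) 0)

theorem deriv_ySal (a : ℝ) :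
    deriv (ySal a) = fun s => -a * ∫ t in (0 : ℝ)..s, sinh (t ^ 2 / 2) :=
  deriv_const_mul_primitive (contDiff_primitive (n := 0) contDiff_sinh_sq_div_two 0).continuous _ _

theorem deriv_zSal (a : ℝ) :
    deriv (zSal a) = fun s => a * ∫ t in (0 : ℝ)..s, cosh (t ^ 2 / 2) :=
  deriv_const_mul_primitive (contDiff_primitive (n := 0) contDiff_cosh_sq_div_two 0).continuous _ _

theorem deriv_deriv_ySal (a : ℝ) : deriv (deriv (ySal a)) = fun s => -a * sinh (s ^ 2 / 2) := by
  rw [deriv_ySal]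
  exact deriv_const_mul_primitive (contDiff_sinh_sq_div_two (n := 0)).continuous _ _

theorem deriv_deriv_zSal (a : ℝ) : deriv (deriv (zSal a)) = fun s => a * cosh (s ^ 2 / 2) := by
  rw [deriv_zSal]
  exact deriv_const_mul_primitive (contDiff_cosh_sq_div_two (n := 0)).continuous _ _

theorem deriv_deriv_deriv_ySal (a : ℝ) :
    deriv (deriv (deriv (ySal a))) = fun s => -a * (s * cosh (s ^ 2 / 2)) := by
  rw [deriv_deriv_ySal]
  funext s
  exact (((hasDerivAt_sq_div_two s).sinh).const_mul (-a)).deriv.trans (by ring)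

theorem deriv_deriv_deriv_zSal (a : ℝ) :
    deriv (deriv (deriv (zSal a))) = fun s => a * (s * sinh (s ^ 2 / 2)) := by
  rw [deriv_deriv_zSal]
  funext s
  exact (((hasDerivAt_sq_div_two s).cosh).const_mul a).deriv.trans (by ring)

/-- For `a > 0`, the curve `α s = (s, ySal a s, zSal a s)` is an admissible
spacelike curve in `G¹₃` with constant curvature `a` and torsion `s`, with tangent
`T s = (1, -a ∫₀ˢ sinh(t²/2), a ∫₀ˢ cosh(t²/2))`, principal normal
`N s = (0, -sinh(s²/2), cosh(s²/2))` and binormal `B s = (0, -cosh(s²/2), sinh(s²/2))`;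
in particular the curvature is constant and the torsion is non-constant (a Salkowski
curve). -/
theorem stmt_14 (a : ℝ) (ha : 0 < a) :
    ContDiff ℝ 3 (ySal a) ∧ ContDiff ℝ 3 (zSal a) ∧
    (∀ s : ℝ,
      deriv (ySal a) s = -a * ∫ t in (0 : ℝ)..s, Real.sinh (t ^ 2 / 2) ∧
      deriv (zSal a) s = a * ∫ t in (0 : ℝ)..s, Real.cosh (t ^ 2 / 2) ∧
      (deriv (deriv (ySal a)) s) ^ 2 - (deriv (deriv (zSal a)) s) ^ 2 ≠ 0 ∧
      Real.sqrt |(deriv (deriv (ySal a)) s) ^ 2 - (deriv (deriv (zSal a)) s) ^ 2| = a ∧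
      (deriv (deriv (ySal a)) s * deriv (deriv (deriv (zSal a))) s -
        deriv (deriv (deriv (ySal a))) s * deriv (deriv (zSal a)) s) / a ^ 2 = s ∧
      deriv (deriv (ySal a)) s / a = -Real.sinh (s ^ 2 / 2) ∧
      deriv (deriv (zSal a)) s / a = Real.cosh (s ^ 2 / 2)) ∧
    (∃ ε : ℝ, (ε = 1 ∨ ε = -1) ∧ ∀ s : ℝ,
      |(deriv (deriv (ySal a)) s) ^ 2 - (deriv (deriv (zSal a)) s) ^ 2| =
        ε * ((deriv (deriv (ySal a)) s) ^ 2 - (deriv (deriv (zSal a)) s) ^ 2) ∧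
      ε * deriv (deriv (zSal a)) s / a = -Real.cosh (s ^ 2 / 2) ∧
      ε * deriv (deriv (ySal a)) s / a = Real.sinh (s ^ 2 / 2)) ∧
    ¬ ∃ c : ℝ, ∀ s : ℝ,
      (deriv (deriv (ySal a)) s * deriv (deriv (deriv (zSal a))) s -
        deriv (deriv (deriv (ySal a))) s * deriv (deriv (zSal a)) s) / a ^ 2 = c := by
  rw [deriv_deriv_deriv_ySal, deriv_deriv_deriv_zSal, deriv_deriv_ySal, deriv_deriv_zSal,
    deriv_ySal, deriv_zSal]
  have hκ (x : ℝ) : (-a * sinh x) ^ 2 - (a * cosh x) ^ 2 = -a ^ 2 := by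
    linear_combination (-a ^ 2) * cosh_sq_sub_sinh_sq x
  have hτ (s : ℝ) : (-a * sinh (s ^ 2 / 2) * (a * (s * sinh (s ^ 2 / 2))) -
      -a * (s * cosh (s ^ 2 / 2)) * (a * cosh (s ^ 2 / 2))) / a ^ 2 = s := by
    rw [div_eq_iff (by positivity)]
    linear_combination (s * a ^ 2) * cosh_sq_sub_sinh_sq (s ^ 2 / 2)
  have habs : |-a ^ 2| = a ^ 2 := by rw [abs_neg, abs_sq]
  refine ⟨contDiff_ySal a, contDiff_zSal a, fun s => ⟨rfl, rfl, ?_, ?_, hτ s, ?_, ?_⟩,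
    ⟨-1, Or.inr rfl, fun s => ⟨?_, ?_, ?_⟩⟩, fun ⟨c, hc⟩ => ?_⟩
  · rw [hκ]; exact neg_ne_zero.2 (by positivity)
  · rw [hκ, habs, sqrt_sq ha.le]
  · field_simp
  · field_simp
  · rw [hκ, habs]; ring
  · field_simp
  · field_simp
  · linarith [(hτ 0).symm.trans (hc 0), (hτ 1).symm.trans (hc 1)]
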